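/- arXiv:1701.07345 — 5 statements merged into one kernel-verified Lean document; each statement's English description precedes it below -/
import Mathlib

section
/- Let n ≥ 1 and let U be a continuous group homomorphism from the orthogonal group O(3) to the orthogonal group O(n) (acting by real orthogonal n × n matrices). Let ν be a finite Borel measure on ℝ³ that is invariant under every g ∈ O(3), and let f : ℝ³ → Matrix n n ℝ be a bounded measurable function satisfying f(g p) = U(g) f(p) U(g)ᵀ for all g ∈ O(3) and all p ∈ ℝ³. Then the matrix-valued function B(h) = ∫_{ℝ³} e^{i⟨p,h⟩} f(p) dν(p) satisfies B(g h) = U(g) B(h) U(g)ᵀ for all g ∈ O(3) and all h ∈ ℝ³. -/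
/-!
Substituting `p ↦ g p`, which preserves `ν` and inner products, turns `B (g h)` into the
integral of `U(g) f(p) U(g)ᵀ` against the phase `e^{i⟪p, h⟫}`. Each entry of that conjugate is a
finite linear combination of entries of `f`, and the integral commutes with it because the entries
of `f` are bounded and measurable, hence integrable against the finite measure `ν`.
-/

open MeasureTheory Matrix

namespace Matrix.UnitaryGroup

variable {𝕜 n : Type*} [RCLike 𝕜] [Fintype n] [DecidableEq n]

noncomputable def toLinearIsometryEquiv (A : unitaryGroup n 𝕜) :
    EuclideanSpace 𝕜 n ≃ₗᵢ[𝕜] EuclideanSpace 𝕜 n :=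
  Unitary.linearIsometryEquiv
    ⟨toEuclideanCLM (n := n) (𝕜 := 𝕜) A, Unitary.map_mem _ A.2⟩

@[simp]
theorem coe_toLinearIsometryEquiv (A : unitaryGroup n 𝕜) :
    ⇑(toLinearIsometryEquiv A) = toEuclideanLin (A : Matrix n n 𝕜) :=
  rfl

end Matrix.UnitaryGroup

theorem Matrix.integral_mul_mul_apply {𝕜 α l m n o : Type*} [RCLike 𝕜] [MeasurableSpace α]
    {μ : Measure α} [Fintype m] [Fintype n] (A : Matrix l m 𝕜) (F : α → Matrix m n 𝕜)
    (C : Matrix n o 𝕜) (hF : ∀ k k', Integrable (fun a => F a k k') μ) (i : l) (j : o) :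
    ∫ a, (A * F a * C) i j ∂μ = (A * of (fun k k' => ∫ a, F a k k' ∂μ) * C) i j := by
  simp only [mul_apply, of_apply]
  rw [integral_finsetSum _ fun k' _ => ?_]
  · refine Finset.sum_congr rfl fun k' _ => ?_
    rw [integral_mul_const, integral_finsetSum _ fun k _ => (hF k k').const_mul _]
    simp only [integral_const_mul, Finset.sum_mul]
  · exact (integrable_finsetSum _ fun k _ => (hF k k').const_mul _).mul_const _

theorem integrable_exp_mul_I_mul_ofReal {α : Type*} [MeasurableSpace α] {μ : Measure α}
    [IsFiniteMeasure μ] {θ u : α → ℝ} (hθ : Measurable θ) (hu : Measurable u) {C : ℝ}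
    (hC : ∀ a, |u a| ≤ C) :
    Integrable (fun a => Complex.exp (Complex.I * θ a) * u a) μ := by
  refine Integrable.of_bound (by fun_prop) C (ae_of_all _ fun a => ?_)
  rw [norm_mul, mul_comm Complex.I, Complex.norm_exp_ofReal_mul_I, one_mul, Complex.norm_real]
  exact hC a

theorem isotropy_of_equivariant_spectral_density_general
    (n : ℕ)
    (U : Matrix.orthogonalGroup (Fin 3) ℝ →* Matrix.orthogonalGroup (Fin n) ℝ)
    (ν : Measure (EuclideanSpace ℝ (Fin 3))) [IsFiniteMeasure ν]
    (hνinv : ∀ g : Matrix.orthogonalGroup (Fin 3) ℝ,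
      Measure.map (fun p => Matrix.toEuclideanLin (g : Matrix (Fin 3) (Fin 3) ℝ) p) ν = ν)
    (f : EuclideanSpace ℝ (Fin 3) → Matrix (Fin n) (Fin n) ℝ)
    (hfmeas : ∀ i j, Measurable fun p => f p i j)
    (hfbdd : ∃ C : ℝ, ∀ p i j, |f p i j| ≤ C)
    (hfequiv : ∀ (g : Matrix.orthogonalGroup (Fin 3) ℝ) (p : EuclideanSpace ℝ (Fin 3)),
      f (Matrix.toEuclideanLin (g : Matrix (Fin 3) (Fin 3) ℝ) p) =
        (U g : Matrix (Fin n) (Fin n) ℝ) * f p * (U g : Matrix (Fin n) (Fin n) ℝ)ᵀ)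
    (B : EuclideanSpace ℝ (Fin 3) → Matrix (Fin n) (Fin n) ℂ)
    (hB : ∀ h i j, B h i j =
      ∫ p, Complex.exp (Complex.I * ((inner ℝ p h : ℝ) : ℂ)) * (f p i j : ℂ) ∂ν) :
    ∀ (g : Matrix.orthogonalGroup (Fin 3) ℝ) (h : EuclideanSpace ℝ (Fin 3)),
      B (Matrix.toEuclideanLin (g : Matrix (Fin 3) (Fin 3) ℝ) h) =
        ((U g : Matrix (Fin n) (Fin n) ℝ).map (fun t => (t : ℂ))) * B h *
          ((U g : Matrix (Fin n) (Fin n) ℝ).map (fun t => (t : ℂ)))ᵀ := by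
  intro g h
  obtain ⟨C, hC⟩ := hfbdd
  set e := UnitaryGroup.toLinearIsometryEquiv g
  have he : MeasurePreserving e ν ν := ⟨e.continuous.measurable, hνinv g⟩
  set M := (U g : Matrix (Fin n) (Fin n) ℝ).map (fun t => (t : ℂ))
  set F : EuclideanSpace ℝ (Fin 3) → Matrix (Fin n) (Fin n) ℂ :=
    fun p => Complex.exp (Complex.I * ((inner ℝ p h : ℝ) : ℂ)) • (f p).map (fun t => (t : ℂ))
  have hF : ∀ k l, Integrable (fun p => F p k l) ν := fun k l =>
    integrable_exp_mul_I_mul_ofReal (by fun_prop) (hfmeas k l) (fun p => hC p k l)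
  ext i j
  calc B (e h) i j
      = ∫ p, Complex.exp (Complex.I * ((inner ℝ (e p) (e h) : ℝ) : ℂ)) * (f (e p) i j : ℂ) ∂ν :=
        (hB _ i j).trans (he.integral_comp e.toHomeomorph.measurableEmbedding _).symm
    _ = ∫ p, (M * F p * Mᵀ) i j ∂ν := by
        congr 1 with p
        rw [e.inner_map_map, UnitaryGroup.coe_toLinearIsometryEquiv, hfequiv]
        simp only [F, Matrix.mul_smul, Matrix.smul_mul, Matrix.smul_apply, smul_eq_mul]
        congr 1
        simp only [M, mul_apply, map_apply, transpose_apply]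
        push_cast
        rfl
    _ = (M * of (fun k l => ∫ p, F p k l ∂ν) * Mᵀ) i j := integral_mul_mul_apply _ _ _ hF i j
    _ = (M * B h * Mᵀ) i j :=
        congrArg (fun X : Matrix (Fin n) (Fin n) ℂ => (M * X * Mᵀ) i j)
          (ext fun k l => by simp [F, hB])

/-- If `U : O(3) → O(n)` is a continuous homomorphism, `ν` is a
finite `O(3)`-invariant measure on `ℝ³`, and the bounded measurable matrix-valued
density `f` satisfies the equivariance `f(gp) = U(g) f(p) U(g)ᵀ`, then the
matrix-valued function `B(h) = ∫ e^{i⟨p,h⟩} f(p) dν(p)` satisfies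
`B(gh) = U(g) B(h) U(g)ᵀ` (isotropy of the correlation tensor). -/
theorem isotropy_of_equivariant_spectral_density
    (n : ℕ) (hn : 1 ≤ n)
    (U : Matrix.orthogonalGroup (Fin 3) ℝ →* Matrix.orthogonalGroup (Fin n) ℝ)
    (hUcont : Continuous fun g => U g)
    (ν : Measure (EuclideanSpace ℝ (Fin 3))) [IsFiniteMeasure ν]
    (hνinv : ∀ g : Matrix.orthogonalGroup (Fin 3) ℝ,
      Measure.map (fun p => Matrix.toEuclideanLin (g : Matrix (Fin 3) (Fin 3) ℝ) p) ν = ν)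
    (f : EuclideanSpace ℝ (Fin 3) → Matrix (Fin n) (Fin n) ℝ)
    (hfmeas : ∀ i j, Measurable fun p => f p i j)
    (hfbdd : ∃ C : ℝ, ∀ p i j, |f p i j| ≤ C)
    (hfequiv : ∀ (g : Matrix.orthogonalGroup (Fin 3) ℝ) (p : EuclideanSpace ℝ (Fin 3)),
      f (Matrix.toEuclideanLin (g : Matrix (Fin 3) (Fin 3) ℝ) p) =
        (U g : Matrix (Fin n) (Fin n) ℝ) * f p * (U g : Matrix (Fin n) (Fin n) ℝ)ᵀ)
    (B : EuclideanSpace ℝ (Fin 3) → Matrix (Fin n) (Fin n) ℂ)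
    (hB : ∀ h i j, B h i j =
      ∫ p, Complex.exp (Complex.I * ((inner ℝ p h : ℝ) : ℂ)) * (f p i j : ℂ) ∂ν) :
    ∀ (g : Matrix.orthogonalGroup (Fin 3) ℝ) (h : EuclideanSpace ℝ (Fin 3)),
      B (Matrix.toEuclideanLin (g : Matrix (Fin 3) (Fin 3) ℝ) h) =
        ((U g : Matrix (Fin n) (Fin n) ℝ).map (fun t => (t : ℂ))) * B h *
          ((U g : Matrix (Fin n) (Fin n) ℝ).map (fun t => (t : ℂ)))ᵀ :=
  isotropy_of_equivariant_spectral_density_general n U ν hνinv f hfmeas hfbdd hfequiv B hB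
end

section
/- Let m ≥ 2, let ν_1,…,ν_m > 0, σ_1,…,σ_m > 0, a > 0, and let β be a real symmetric positive semidefinite m × m matrix with β_{ii} = 1 for all i. Set ν_{ij} = (ν_i + ν_j)/2 and b_{ij} = β_{ij} [Γ(ν_i + 3/2) Γ(ν_j + 3/2) / (Γ(ν_i) Γ(ν_j))]^{1/2} · Γ(ν_{ij}) / Γ(ν_{ij} + 3/2) for all 1 ≤ i, j ≤ m (so b_{ii} = 1). Then for every λ ≥ 0, the m × m matrix with entries f_{ij}(λ) = b_{ij} σ_i σ_j Γ(ν_{ij} + 3/2) a^{2ν_{ij}} / (2 π^{3/2} (a² + λ²)^{ν_{ij} + 3/2}) is positive semidefinite. -/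
/-!
By Euler's integral, `Γ((ν_i + ν_j)/2) = ∫₀^∞ g_i g_j` with `g_i(t) = e^{-t/2} t^{(ν_i - 1)/2}`, so
the matrix `Γ((ν_i + ν_j)/2)` is a Gram matrix in `L²(0, ∞)` and hence positive semidefinite.
The choice of `b_{ij}` is exactly what makes `f_{ij}(λ) = D_i β_{ij} Γ((ν_i + ν_j)/2) D_j` for
real factors `D_i`, so `f(λ)` is a diagonal congruence of the Schur product of `β` with that Gram
matrix.
-/

open Matrix Real MeasureTheory Set

theorem Matrix.PosSemidef.star_mul_mul {n R : Type*} [Fintype n] [DecidableEq n] [Ring R]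
    [PartialOrder R] [StarRing R] {A : Matrix n n R} (hA : A.PosSemidef) (d : n → R) :
    (of fun i j => star (d i) * A i j * d j).PosSemidef := by
  convert hA.conjTranspose_mul_mul_same (diagonal d) using 1
  ext i j
  simp [mul_diagonal, diagonal_mul]

theorem MeasureTheory.posSemidef_integral_mul {ι α : Type*} [Finite ι] [MeasurableSpace α]
    {μ : Measure α} {g : ι → α → ℝ} (hg : ∀ i, MemLp (g i) 2 μ) :
    (of fun i j => ∫ t, g i t * g j t ∂μ).PosSemidef := by
  have hgram : (of fun i j => ∫ t, g i t * g j t ∂μ) = gram ℝ fun i => (hg i).toLp := by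
    ext i j
    rw [gram_apply, L2.inner_def, of_apply]
    refine integral_congr_ae ?_
    filter_upwards [(hg i).coeFn_toLp, (hg j).coeFn_toLp] with t hi hj
    simp [hi, hj, mul_comm]
  exact hgram ▸ posSemidef_gram ℝ _

theorem Real.posSemidef_Gamma_add_div_two {ι : Type*} [Finite ι] {ν : ι → ℝ}
    (hν : ∀ i, 0 < ν i) : (of fun i j => Gamma ((ν i + ν j) / 2)).PosSemidef := by
  set g : ι → ℝ → ℝ := fun i t => exp (-t / 2) * t ^ ((ν i - 1) / 2)
  have hg_mul : ∀ i j, EqOn (fun t => g i t * g j t)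
      (fun t => exp (-t) * t ^ ((ν i + ν j) / 2 - 1)) (Ioi 0) := by
    intro i j t (ht : 0 < t)
    simp only [g]
    rw [mul_mul_mul_comm, ← exp_add, ← rpow_add ht]
    ring_nf
  have hg : ∀ i, MemLp (g i) 2 (volume.restrict (Ioi 0)) := by
    intro i
    refine (memLp_two_iff_integrable_sq (by fun_prop)).mpr ?_
    refine ((GammaIntegral_convergent (hν i)).congr_fun (fun t ht => ?_) measurableSet_Ioi)
    have := hg_mul i i ht
    simp only [add_self_div_two] at this
    rw [sq, this]
  convert posSemidef_integral_mul hg using 1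
  ext i j
  rw [of_apply, of_apply, Gamma_eq_integral (by linarith [hν i, hν j]),
    setIntegral_congr_fun measurableSet_Ioi (hg_mul i j)]

/-- The factor `D_i`: `D_i ^ 2 * Γ(ν_i)` is the marginal Matérn spectral density `f_{ii}(λ)`. -/
noncomputable def maternSpectralRoot (a l σ ν : ℝ) : ℝ :=
  σ * √(Gamma (ν + 3/2) / Gamma ν) * a ^ ν / (√(2 * π ^ (3/2 : ℝ)) * (a ^ 2 + l ^ 2) ^ (ν/2 + 3/4))

theorem maternSpectralRoot_mul {a l σ₁ σ₂ ν₁ ν₂ : ℝ} (ha : 0 < a) (hν₁ : 0 < ν₁) (hν₂ : 0 < ν₂)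
    (c : ℝ) :
    c * √(Gamma (ν₁ + 3/2) * Gamma (ν₂ + 3/2) / (Gamma ν₁ * Gamma ν₂)) *
        (Gamma ((ν₁ + ν₂) / 2) / Gamma ((ν₁ + ν₂) / 2 + 3/2)) * σ₁ * σ₂ *
        Gamma ((ν₁ + ν₂) / 2 + 3/2) * a ^ (2 * ((ν₁ + ν₂) / 2)) /
        (2 * π ^ (3/2 : ℝ) * (a ^ 2 + l ^ 2) ^ ((ν₁ + ν₂) / 2 + 3/2)) =
      maternSpectralRoot a l σ₁ ν₁ * (c * Gamma ((ν₁ + ν₂) / 2)) *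
        maternSpectralRoot a l σ₂ ν₂ := by
  have hr : 0 < a ^ 2 + l ^ 2 := by positivity
  have hΓ : Gamma ((ν₁ + ν₂) / 2 + 3/2) ≠ 0 := (Gamma_pos_of_pos (by positivity)).ne'
  have hsqrt : √(Gamma (ν₁ + 3/2) * Gamma (ν₂ + 3/2) / (Gamma ν₁ * Gamma ν₂)) =
      √(Gamma (ν₁ + 3/2) / Gamma ν₁) * √(Gamma (ν₂ + 3/2) / Gamma ν₂) := by
    rw [← sqrt_mul (div_pos (Gamma_pos_of_pos (by positivity)) (Gamma_pos_of_pos hν₁)).le,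
      div_mul_div_comm]
  have hpow_a : a ^ (2 * ((ν₁ + ν₂) / 2)) = a ^ ν₁ * a ^ ν₂ := by
    rw [← rpow_add ha]; ring_nf
  have hpow_r : (a ^ 2 + l ^ 2) ^ ((ν₁ + ν₂) / 2 + 3/2) =
      (a ^ 2 + l ^ 2) ^ (ν₁/2 + 3/4) * (a ^ 2 + l ^ 2) ^ (ν₂/2 + 3/4) := by
    rw [← rpow_add hr]; ring_nf
  have hconst : 2 * π ^ (3/2 : ℝ) = √(2 * π ^ (3/2 : ℝ)) * √(2 * π ^ (3/2 : ℝ)) :=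
    (mul_self_sqrt (by positivity)).symm
  rw [hsqrt, hpow_a, hpow_r, hconst]
  unfold maternSpectralRoot
  field_simp

theorem parsimonious_matern_valid_general
    (m : ℕ)
    (ν σ : Fin m → ℝ) (hν : ∀ i, 0 < ν i)
    (a : ℝ) (ha : 0 < a)
    (β : Matrix (Fin m) (Fin m) ℝ) (hβpsd : β.PosSemidef)
    (b : Fin m → Fin m → ℝ)
    (hb : ∀ i j, b i j = β i j *
      Real.sqrt (Real.Gamma (ν i + 3/2) * Real.Gamma (ν j + 3/2) /
        (Real.Gamma (ν i) * Real.Gamma (ν j))) *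
      (Real.Gamma ((ν i + ν j) / 2) / Real.Gamma ((ν i + ν j) / 2 + 3/2))) :
    ∀ l : ℝ, 0 ≤ l →
      (Matrix.of (fun i j =>
        b i j * σ i * σ j * Real.Gamma ((ν i + ν j) / 2 + 3/2) *
          a ^ (2 * ((ν i + ν j) / 2)) /
          (2 * Real.pi ^ ((3 : ℝ) / 2) *
            (a ^ 2 + l ^ 2) ^ ((ν i + ν j) / 2 + 3/2)) :
        Matrix (Fin m) (Fin m) ℝ)).PosSemidef := by
  intro l _
  set D := fun i => maternSpectralRoot a l (σ i) (ν i)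
  have hfactor : (of fun i j => b i j * σ i * σ j * Gamma ((ν i + ν j) / 2 + 3/2) *
      a ^ (2 * ((ν i + ν j) / 2)) / (2 * π ^ (3/2 : ℝ) * (a ^ 2 + l ^ 2) ^ ((ν i + ν j) / 2 + 3/2)))
      = of fun i j => star (D i) * (β ⊙ of fun i j => Gamma ((ν i + ν j) / 2)) i j * D j := by
    ext i j
    simp only [of_apply, hb, maternSpectralRoot_mul ha (hν i) (hν j), hadamard_apply,
      star_trivial, D]
  rw [hfactor]
  exact (hβpsd.hadamard (posSemidef_Gamma_add_div_two hν)).star_mul_mul D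

/-- Validity of the parsimonious multivariate Matérn model: with
`ν_{ij} = (ν_i + ν_j)/2`, a common scale `a`, and the stated co-location
coefficients `b_{ij}`, the matrix of Matérn spectral densities is positive
semidefinite at every wavenumber `λ ≥ 0`. -/
theorem parsimonious_matern_valid
    (m : ℕ) (hm : 2 ≤ m)
    (ν σ : Fin m → ℝ) (hν : ∀ i, 0 < ν i) (hσ : ∀ i, 0 < σ i)
    (a : ℝ) (ha : 0 < a)
    (β : Matrix (Fin m) (Fin m) ℝ) (hβsym : β.IsSymm) (hβpsd : β.PosSemidef)
    (hβdiag : ∀ i, β i i = 1)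
    (b : Fin m → Fin m → ℝ)
    (hb : ∀ i j, b i j = β i j *
      Real.sqrt (Real.Gamma (ν i + 3/2) * Real.Gamma (ν j + 3/2) /
        (Real.Gamma (ν i) * Real.Gamma (ν j))) *
      (Real.Gamma ((ν i + ν j) / 2) / Real.Gamma ((ν i + ν j) / 2 + 3/2))) :
    ∀ l : ℝ, 0 ≤ l →
      (Matrix.of (fun i j =>
        b i j * σ i * σ j * Real.Gamma ((ν i + ν j) / 2 + 3/2) *
          a ^ (2 * ((ν i + ν j) / 2)) /
          (2 * Real.pi ^ ((3 : ℝ) / 2) *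
            (a ^ 2 + l ^ 2) ^ ((ν i + ν j) / 2 + 3/2)) :
        Matrix (Fin m) (Fin m) ℝ)).PosSemidef :=
  parsimonious_matern_valid_general m ν σ hν a ha β hβpsd b hb
end

section
/- Let m ≥ 1, let a > 0, let (ν_{ij}) be a real symmetric m × m matrix with ν_{ij} > 0 for all i, j such that (ν_{ij}) is conditionally negative definite, and let (σ_{ij}) be a real symmetric m × m matrix such that the matrix with entries σ_{ij} Γ(ν_{ij} + 3/2)/Γ(ν_{ij}) is positive semidefinite. Then for every λ ≥ 0, the m × m matrix with entries σ_{ij} a^{2ν_{ij}} Γ(ν_{ij} + 3/2)/Γ(ν_{ij}) · (a² + λ²)^{−(ν_{ij} + 3/2)} is positive semidefinite. -/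
open Matrix Real

/-- A symmetric real matrix `Θ` is conditionally negative definite if
`∑_{i,j} c_i c_j Θ_{ij} ≤ 0` whenever `∑_i c_i = 0`. -/
def CondNegDef {m : ℕ} (Θ : Matrix (Fin m) (Fin m) ℝ) : Prop :=
  ∀ c : Fin m → ℝ, (∑ i, c i) = 0 → (∑ i, ∑ j, c i * c j * Θ i j) ≤ 0

/-!
Put `t = a² / (a² + λ²) ∈ (0, 1]`. The spectral matrix is `(a² + λ²)^(-3/2)` times the Hadamard
product of `(σ_{ij} Γ(ν_{ij} + 3/2) / Γ(ν_{ij}))` with `(t ^ ν_{ij}) = (exp (-r ν_{ij}))`, where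
`r = -log t ≥ 0`, so by the Schur product theorem it suffices that `exp (-Θ)` (entrywise) is
positive semidefinite for the conditionally negative definite `Θ = r ν` (Schoenberg). Fixing an
index `i₀`, `exp (-θ_{ij}) = d_i d_j exp K_{ij}` with `K_{ij} = θ_{i i₀} + θ_{i₀ j} - θ_{ij} - θ_{i₀ i₀}`,
and `K` is positive semidefinite because `xᵀ K x = -yᵀ Θ y` for the zero-sum vector
`y = x - (∑ x) e_{i₀}`. Finally the entrywise exponential of a positive semidefinite matrix is a
sum of nonnegative multiples of its Hadamard powers, each positive semidefinite by Schur.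
-/

open scoped Nat ComplexOrder

namespace Matrix

variable {ι 𝕜 : Type*} [Fintype ι] [RCLike 𝕜]

theorem PosSemidef.map_pow {B : Matrix ι ι 𝕜} (hB : B.PosSemidef) :
    ∀ n : ℕ, (B.map (· ^ n)).PosSemidef
  | 0 => by
    simpa [vecMulVec, Matrix.map] using posSemidef_vecMulVec_self_star (1 : ι → 𝕜)
  | n + 1 => by
    have : B.map (· ^ (n + 1)) = B.map (· ^ n) ⊙ B := by ext; simp [pow_succ]
    exact this ▸ (hB.map_pow n).hadamard hB

theorem PosSemidef.map_exp {B : Matrix ι ι ℝ} (hB : B.PosSemidef) :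
    (B.map Real.exp).PosSemidef := by
  refine .of_dotProduct_mulVec_nonneg (hB.isHermitian.map _ fun _ => rfl) fun x => ?_
  have hseries : HasSum (fun n : ℕ => star x ⬝ᵥ (B.map (· ^ n) *ᵥ x) / n !)
      (star x ⬝ᵥ (B.map Real.exp *ᵥ x)) := by
    simp only [dotProduct, mulVec, Finset.sum_div, Finset.mul_sum, map_apply]
    refine hasSum_sum fun i _ => hasSum_sum fun j _ => ?_
    have := ((NormedSpace.expSeries_div_hasSum_exp (B i j)).mul_right (x j)).mul_left (star x i)
    rw [← Real.exp_eq_exp_ℝ] at this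
    exact this.congr_fun fun n => by ring
  exact hseries.nonneg fun n =>
    div_nonneg ((hB.map_pow n).dotProduct_mulVec_nonneg x) (by positivity)

end Matrix

section CondNegDef

variable {m : ℕ} {Θ : Matrix (Fin m) (Fin m) ℝ}

theorem condNegDef_iff_dotProduct_mulVec :
    CondNegDef Θ ↔ ∀ c : Fin m → ℝ, ∑ i, c i = 0 → c ⬝ᵥ (Θ *ᵥ c) ≤ 0 := by
  have (c : Fin m → ℝ) : ∑ i, ∑ j, c i * c j * Θ i j = c ⬝ᵥ (Θ *ᵥ c) := by
    simp only [dotProduct, mulVec, Finset.mul_sum]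
    exact Finset.sum_congr rfl fun i _ => Finset.sum_congr rfl fun j _ => by ring
  simp only [CondNegDef, this]

theorem CondNegDef.posSemidef_centered (hsym : Θ.IsSymm) (hΘ : CondNegDef Θ) (i₀ : Fin m) :
    (of fun i j => Θ i i₀ + Θ i₀ j - Θ i j - Θ i₀ i₀).PosSemidef := by
  set P : Matrix (Fin m) (Fin m) ℝ := 1 - vecMulVec (Pi.single i₀ 1) 1
  have hK : (of fun i j => Θ i i₀ + Θ i₀ j - Θ i j - Θ i₀ i₀) = -(Pᵀ * Θ * P) := by
    ext i j
    simp only [P, of_apply, vecMulVec, Pi.single_apply, Pi.one_apply, mul_one, transpose_sub,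
      transpose_one, sub_mul, one_mul, mul_sub, Matrix.neg_apply, Matrix.sub_apply,
      Matrix.mul_apply, transpose_apply, ite_mul, zero_mul, Finset.sum_ite_eq', Finset.mem_univ,
      ↓reduceIte, mul_ite, mul_zero, neg_sub]
    ring
  have hP (x : Fin m → ℝ) : ∑ i, (P *ᵥ x) i = 0 := by
    simp only [P, sub_mulVec, one_mulVec, vecMulVec_mulVec, op_smul_eq_smul]
    simp [Finset.sum_sub_distrib, ← Finset.mul_sum, dotProduct]
  rw [hK]
  refine .of_dotProduct_mulVec_nonneg ?_ fun x => ?_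
  · simpa [conjTranspose_eq_transpose_of_trivial] using
      (isHermitian_conjTranspose_mul_mul P (isHermitian_iff_isSymm.mpr hsym)).neg
  · have := condNegDef_iff_dotProduct_mulVec.mp hΘ _ (hP x)
    rw [neg_mulVec, dotProduct_neg, ← mulVec_mulVec, ← mulVec_mulVec, dotProduct_mulVec,
      vecMul_transpose]
    simpa using this

theorem CondNegDef.smul (hΘ : CondNegDef Θ) {r : ℝ} (hr : 0 ≤ r) : CondNegDef (r • Θ) := by
  refine condNegDef_iff_dotProduct_mulVec.mpr fun c hc => ?_
  rw [smul_mulVec, dotProduct_smul, smul_eq_mul]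
  exact mul_nonpos_of_nonneg_of_nonpos hr (condNegDef_iff_dotProduct_mulVec.mp hΘ c hc)

theorem CondNegDef.posSemidef_map_exp_neg (hsym : Θ.IsSymm) (hΘ : CondNegDef Θ) :
    (Θ.map fun x => exp (-x)).PosSemidef := by
  rcases isEmpty_or_nonempty (Fin m) with hm | ⟨⟨i₀⟩⟩
  · exact Subsingleton.elim (0 : Matrix (Fin m) (Fin m) ℝ) (Θ.map _) ▸ PosSemidef.zero
  set d : Fin m → ℝ := fun i => exp (Θ i₀ i₀ / 2 - Θ i i₀)
  have hfactor : Θ.map (fun x => exp (-x)) =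
      (diagonal d)ᴴ * (of fun i j => Θ i i₀ + Θ i₀ j - Θ i j - Θ i₀ i₀).map exp * diagonal d := by
    ext i j
    simp only [map_apply, of_apply, diagonal_conjTranspose, diagonal_mul, mul_diagonal, d,
      star_trivial, ← exp_add]
    rw [hsym.apply i₀ j]
    ring_nf
  rw [hfactor]
  exact (hΘ.posSemidef_centered hsym i₀).map_exp.conjTranspose_mul_mul_same _

theorem CondNegDef.posSemidef_map_rpow (hsym : Θ.IsSymm) (hΘ : CondNegDef Θ) {t : ℝ}
    (ht₀ : 0 < t) (ht₁ : t ≤ 1) : (Θ.map (t ^ ·)).PosSemidef := by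
  have hexp : Θ.map (t ^ ·) = ((-log t) • Θ).map fun x => exp (-x) := by
    ext i j
    simp [rpow_def_of_pos ht₀, mul_comm]
  rw [hexp]
  exact (hΘ.smul (neg_nonneg.mpr (log_nonpos ht₀.le ht₁))).posSemidef_map_exp_neg (hsym.smul _)

end CondNegDef

theorem flexible_matern_valid_A1_general
    (m : ℕ) (a : ℝ) (ha : 0 < a)
    (ν : Matrix (Fin m) (Fin m) ℝ) (hνsym : ν.IsSymm)
    (hνcnd : CondNegDef ν)
    (σ : Matrix (Fin m) (Fin m) ℝ)
    (hσ : (Matrix.of (fun i j =>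
      σ i j * Real.Gamma (ν i j + 3/2) / Real.Gamma (ν i j) :
      Matrix (Fin m) (Fin m) ℝ)).PosSemidef) :
    ∀ l : ℝ, 0 ≤ l →
      (Matrix.of (fun i j =>
        σ i j * a ^ (2 * ν i j) * Real.Gamma (ν i j + 3/2) / Real.Gamma (ν i j) *
          (a ^ 2 + l ^ 2) ^ (-(ν i j + 3/2)) :
        Matrix (Fin m) (Fin m) ℝ)).PosSemidef := by
  intro l _
  set b := a ^ 2 + l ^ 2
  have hb : 0 < b := by positivity
  have ht : a ^ 2 / b ≤ 1 := (div_le_one hb).mpr (le_add_of_nonneg_right (sq_nonneg l))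
  have hrpow (x : ℝ) : a ^ (2 * x) * b ^ (-(x + 3 / 2)) = (a ^ 2 / b) ^ x * b ^ (-(3 / 2 : ℝ)) := by
    rw [div_rpow (by positivity) hb.le, ← rpow_natCast, ← rpow_mul ha.le, neg_add, rpow_add hb,
      rpow_neg hb.le]
    push_cast; ring
  have hsplit : (of fun i j => σ i j * a ^ (2 * ν i j) * Gamma (ν i j + 3 / 2) / Gamma (ν i j) *
        b ^ (-(ν i j + 3 / 2))) = b ^ (-(3 / 2 : ℝ)) •
      ((of fun i j => σ i j * Gamma (ν i j + 3 / 2) / Gamma (ν i j)) ⊙ ν.map ((a ^ 2 / b) ^ ·)) := by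
    ext i j
    simp only [of_apply, Matrix.smul_apply, hadamard_apply, map_apply, smul_eq_mul]
    linear_combination σ i j * Gamma (ν i j + 3 / 2) / Gamma (ν i j) * hrpow (ν i j)
  rw [hsplit]
  exact (hσ.hadamard (hνcnd.posSemidef_map_rpow hνsym (by positivity) ht)).smul (by positivity)

/-- Validity condition A1 for the flexible multivariate Matérn
model with a common scale parameter `a`: if `(ν_{ij})` is conditionally negative
definite and `(σ_{ij} Γ(ν_{ij}+3/2)/Γ(ν_{ij}))` is positive semidefinite, then
the matrix of Matérn spectral densities is positive semidefinite at every `λ ≥ 0`. -/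
theorem flexible_matern_valid_A1
    (m : ℕ) (hm : 1 ≤ m) (a : ℝ) (ha : 0 < a)
    (ν : Matrix (Fin m) (Fin m) ℝ) (hνsym : ν.IsSymm) (hνpos : ∀ i j, 0 < ν i j)
    (hνcnd : CondNegDef ν)
    (σ : Matrix (Fin m) (Fin m) ℝ) (hσsym : σ.IsSymm)
    (hσ : (Matrix.of (fun i j =>
      σ i j * Real.Gamma (ν i j + 3/2) / Real.Gamma (ν i j) :
      Matrix (Fin m) (Fin m) ℝ)).PosSemidef) :
    ∀ l : ℝ, 0 ≤ l →
      (Matrix.of (fun i j =>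
        σ i j * a ^ (2 * ν i j) * Real.Gamma (ν i j + 3/2) / Real.Gamma (ν i j) *
          (a ^ 2 + l ^ 2) ^ (-(ν i j + 3/2)) :
        Matrix (Fin m) (Fin m) ℝ)).PosSemidef :=
  flexible_matern_valid_A1_general m a ha ν hνsym hνcnd σ hσ
end

section
/- Let m ≥ 1, let ν_1,…,ν_m > 0 and a_1,…,a_m > 0, and set ν_{ij} = (ν_i + ν_j)/2 and a_{ij} = ((a_i^{−2} + a_j^{−2})/2)^{−1/2}. Let (σ_{ij}) be a real symmetric m × m matrix such that the matrix with entries σ_{ij} a_{ij}^{−3} / Γ(ν_{ij}) is positive semidefinite. Then for every λ ≥ 0, the m × m matrix with entries σ_{ij} a_{ij}^{2ν_{ij}} Γ(ν_{ij} + 3/2)/Γ(ν_{ij}) · (a_{ij}² + λ²)^{−(ν_{ij} + 3/2)} is positive semidefinite. -/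
/-!
With `c_i = 1 + λ² a_i⁻²`, the arithmetic-mean parametrisation gives
`a_ij⁻² (a_ij² + λ²) = (c_i + c_j) / 2`, so the spectral matrix is the Hadamard product of the
positive semidefinite matrix `(σ_ij a_ij⁻³ / Γ(ν_ij))` with
`K_ij = Γ(p_ij) ((c_i + c_j) / 2)^(-p_ij)`, `p_ij = ν_ij + 3/2`. By the Gamma integral, `K` is
the Gram matrix in `L²(0, ∞)` of the functions `s ↦ s^((ν_i + 1/2) / 2) exp(-c_i s / 2)`, hence
positive semidefinite, and the Schur product theorem concludes.
-/

open Matrix Real MeasureTheory Set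

theorem Matrix.posSemidef_of_integral_mul {ι α : Type*} [Finite ι] [MeasurableSpace α]
    {μ : Measure α} {f : ι → α → ℝ} (hf : ∀ i, MemLp (f i) 2 μ) :
    (Matrix.of fun i j => ∫ x, f i x * f j x ∂μ).PosSemidef := by
  have h_gram : (Matrix.of fun i j => ∫ x, f i x * f j x ∂μ) = gram ℝ fun i => (hf i).toLp := by
    ext i j
    rw [gram_apply, L2.inner_def, of_apply]
    refine integral_congr_ae ?_
    filter_upwards [(hf i).coeFn_toLp, (hf j).coeFn_toLp] with x hi hj
    rw [hi, hj, Real.inner_apply]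
  exact h_gram ▸ posSemidef_gram ℝ _

lemma integrableOn_rpow_sub_one_mul_exp_neg_mul {p b : ℝ} (hp : 0 < p) (hb : 0 < b) :
    IntegrableOn (fun s : ℝ => s ^ (p - 1) * exp (-(b * s))) (Ioi 0) := by
  refine (integrableOn_rpow_mul_exp_neg_mul_rpow (p := 1) (s := p - 1) (b := b) (by linarith)
    one_pos hb).congr_fun (fun s _ => ?_) measurableSet_Ioi
  simp [rpow_one]

lemma integral_rpow_sub_one_mul_exp_neg_mul {p b : ℝ} (hp : 0 < p) (hb : 0 < b) :
    ∫ s in Ioi 0, s ^ (p - 1) * exp (-(b * s)) = b ^ (-p) * Gamma p := by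
  rw [integral_rpow_mul_exp_neg_mul_Ioi hp hb, one_div, ← rpow_neg_one, ← rpow_mul hb.le,
    neg_one_mul]

theorem posSemidef_gamma_kernel {ι : Type*} [Finite ι] {q c : ι → ℝ}
    (hq : ∀ i, 0 < q i) (hc : ∀ i, 0 < c i) :
    (Matrix.of fun i j => ((c i + c j) / 2) ^ (-((q i + q j) / 2)) *
      Gamma ((q i + q j) / 2)).PosSemidef := by
  set φ : ι → ℝ → ℝ := fun i s => s ^ ((q i - 1) / 2) * exp (-(c i / 2 * s))
  have hφ_mul : ∀ i j, EqOn (fun s => φ i s * φ j s)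
      (fun s => s ^ ((q i + q j) / 2 - 1) * exp (-((c i + c j) / 2 * s))) (Ioi 0) := by
    intro i j s hs
    simp only [φ]
    rw [mul_mul_mul_comm, ← rpow_add hs, ← exp_add]
    ring_nf
  have hpos : ∀ i j, 0 < (q i + q j) / 2 ∧ 0 < (c i + c j) / 2 := fun i j =>
    ⟨by linarith [hq i, hq j], by linarith [hc i, hc j]⟩
  have hφ_mul_integrable : ∀ i j, IntegrableOn (fun s => φ i s * φ j s) (Ioi 0) := fun i j =>
    (integrableOn_rpow_sub_one_mul_exp_neg_mul (hpos i j).1 (hpos i j).2).congr_fun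
      (hφ_mul i j).symm measurableSet_Ioi
  have hφ_memLp : ∀ i, MemLp (φ i) 2 (volume.restrict (Ioi 0)) := fun i =>
    (memLp_two_iff_integrable_sq (by fun_prop)).mpr
      (by simpa only [sq] using (hφ_mul_integrable i i).integrable)
  convert posSemidef_of_integral_mul hφ_memLp using 2
  ext i j
  rw [setIntegral_congr_fun measurableSet_Ioi (hφ_mul i j),
    integral_rpow_sub_one_mul_exp_neg_mul (hpos i j).1 (hpos i j).2]

lemma rpow_two_mul_mul_sq_add_sq_rpow {a : ℝ} (ha : 0 < a) (l ν r : ℝ) :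
    a ^ (2 * ν) * (a ^ 2 + l ^ 2) ^ (-(ν + r)) =
      a ^ (-(2 * r)) * (1 + l ^ 2 * a ^ (-2 : ℝ)) ^ (-(ν + r)) := by
  have h : 1 + l ^ 2 * a ^ (-2 : ℝ) = a ^ (-2 : ℝ) * (a ^ 2 + l ^ 2) := by
    rw [mul_add, ← rpow_natCast a 2, ← rpow_add ha]
    norm_num
    ring
  rw [h, mul_rpow (by positivity) (by positivity), ← rpow_mul ha.le, ← mul_assoc,
    ← rpow_add ha]
  ring_nf

theorem posSemidef_matern_kernel {ι : Type*} [Finite ι] {ν b : ι → ℝ} (hν : ∀ i, 0 < ν i)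
    (hb : ∀ i, 0 ≤ b i) (l : ℝ) :
    (of fun i j => (1 + l ^ 2 * ((b i + b j) / 2)) ^ (-((ν i + ν j) / 2 + 3 / 2)) *
      Gamma ((ν i + ν j) / 2 + 3 / 2)).PosSemidef := by
  have hq : ∀ i j, (ν i + 3 / 2 + (ν j + 3 / 2)) / 2 = (ν i + ν j) / 2 + 3 / 2 :=
    fun i j => by ring
  have hc : ∀ i j, (1 + l ^ 2 * b i + (1 + l ^ 2 * b j)) / 2 = 1 + l ^ 2 * ((b i + b j) / 2) :=
    fun i j => by ring
  have := posSemidef_gamma_kernel (q := fun i => ν i + 3 / 2) (c := fun i => 1 + l ^ 2 * b i)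
    (fun i => by linarith [hν i]) (fun i => by have := hb i; positivity)
  simpa only [hc, hq] using this

theorem flexible_matern_valid_A3b_general
    (m : ℕ)
    (ν a : Fin m → ℝ) (hν : ∀ i, 0 < ν i) (ha : ∀ i, 0 < a i)
    (νm am : Fin m → Fin m → ℝ)
    (hνm : ∀ i j, νm i j = (ν i + ν j) / 2)
    (ham : ∀ i j, am i j = ((a i ^ (-2 : ℝ) + a j ^ (-2 : ℝ)) / 2) ^ (-(1/2) : ℝ))
    (σ : Matrix (Fin m) (Fin m) ℝ)
    (hσ : (Matrix.of (fun i j =>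
      σ i j * am i j ^ (-3 : ℝ) / Real.Gamma (νm i j) :
      Matrix (Fin m) (Fin m) ℝ)).PosSemidef) :
    ∀ l : ℝ, 0 ≤ l →
      (Matrix.of (fun i j =>
        σ i j * am i j ^ (2 * νm i j) * Real.Gamma (νm i j + 3/2) /
          Real.Gamma (νm i j) * (am i j ^ 2 + l ^ 2) ^ (-(νm i j + 3/2)) :
        Matrix (Fin m) (Fin m) ℝ)).PosSemidef := by
  intro l _
  have h_mean_pos : ∀ i j, 0 < (a i ^ (-2 : ℝ) + a j ^ (-2 : ℝ)) / 2 := fun i j => by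
    have := ha i; have := ha j; positivity
  have ham_pos : ∀ i j, 0 < am i j := fun i j => ham i j ▸ rpow_pos_of_pos (h_mean_pos i j) _
  have ham_inv_sq : ∀ i j, am i j ^ (-2 : ℝ) = (a i ^ (-2 : ℝ) + a j ^ (-2 : ℝ)) / 2 := by
    intro i j
    rw [ham, ← rpow_mul (h_mean_pos i j).le]
    norm_num
  have hK : (of fun i j => (1 + l ^ 2 * am i j ^ (-2 : ℝ)) ^ (-(νm i j + 3 / 2)) *
      Gamma (νm i j + 3 / 2)).PosSemidef := by
    simpa only [← hνm, ← ham_inv_sq] using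
      posSemidef_matern_kernel hν (fun i => (rpow_pos_of_pos (ha i) (-2)).le) l
  have h_eq : (of fun i j => σ i j * am i j ^ (2 * νm i j) * Gamma (νm i j + 3 / 2) /
      Gamma (νm i j) * (am i j ^ 2 + l ^ 2) ^ (-(νm i j + 3 / 2))) =
      (of fun i j => σ i j * am i j ^ (-3 : ℝ) / Gamma (νm i j)) ⊙
        (of fun i j => (1 + l ^ 2 * am i j ^ (-2 : ℝ)) ^ (-(νm i j + 3 / 2)) *
          Gamma (νm i j + 3 / 2)) := by
    ext i j
    rw [hadamard_apply, of_apply, of_apply, of_apply,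
      show (-3 : ℝ) = -(2 * (3 / 2)) by norm_num]
    linear_combination σ i j * Gamma (νm i j + 3 / 2) / Gamma (νm i j) *
      rpow_two_mul_mul_sq_add_sq_rpow (ham_pos i j) l (νm i j) (3 / 2)
  exact h_eq ▸ hσ.hadamard hK

/-- Validity condition A3(b), the parsimonious case of the
flexible multivariate Matérn model: with `ν_{ij} = (ν_i + ν_j)/2` and
`a_{ij} = ((a_i^{−2} + a_j^{−2})/2)^{−1/2}`, if `(σ_{ij} a_{ij}^{−3}/Γ(ν_{ij}))` is
positive semidefinite then the matrix of Matérn spectral densities is positive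
semidefinite at every `λ ≥ 0`. -/
theorem flexible_matern_valid_A3b
    (m : ℕ) (hm : 1 ≤ m)
    (ν a : Fin m → ℝ) (hν : ∀ i, 0 < ν i) (ha : ∀ i, 0 < a i)
    (νm am : Fin m → Fin m → ℝ)
    (hνm : ∀ i j, νm i j = (ν i + ν j) / 2)
    (ham : ∀ i j, am i j = ((a i ^ (-2 : ℝ) + a j ^ (-2 : ℝ)) / 2) ^ (-(1/2) : ℝ))
    (σ : Matrix (Fin m) (Fin m) ℝ) (hσsym : σ.IsSymm)
    (hσ : (Matrix.of (fun i j =>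
      σ i j * am i j ^ (-3 : ℝ) / Real.Gamma (νm i j) :
      Matrix (Fin m) (Fin m) ℝ)).PosSemidef) :
    ∀ l : ℝ, 0 ≤ l →
      (Matrix.of (fun i j =>
        σ i j * am i j ^ (2 * νm i j) * Real.Gamma (νm i j + 3/2) /
          Real.Gamma (νm i j) * (am i j ^ 2 + l ^ 2) ^ (-(νm i j + 3/2)) :
        Matrix (Fin m) (Fin m) ℝ)).PosSemidef :=
  flexible_matern_valid_A3b_general m ν a hν ha νm am hνm ham σ hσ
end

section
/- Let C¹ = [[0, 0], [0, 1]], C² = (1/4)[[1, √3], [√3, 3]], and C³ = (1/4)[[1, −√3], [−√3, 3]], and let Φ₁, Φ₂, Φ₃ be finite Borel measures on [0,∞). Define the 2×2-matrix-valued kernel B(x,y) = ∑_{m=1}^{3} (∫₀^∞ sinc(λ‖y−x‖) dΦ_m(λ)) C^m for x, y ∈ ℝ³. Then B is a positive semidefinite matrix-valued kernel: for every finite collection of points x_1,…,x_N ∈ ℝ³ and vectors c_1,…,c_N ∈ ℝ², one has ∑_{j,k} c_jᵀ B(x_j, x_k) c_k ≥ 0. -/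
/-!
Each `C m` is `v vᵀ` for a unit vector `v`, so the quadratic form of `B` is a sum of quadratic
forms of the scalar kernels `∫ sinc (λ ‖y - x‖) dΦ_m(λ)`, evaluated at the numbers `v ⬝ cⱼ`. Being
mixtures of the kernels `sinc (λ ‖y - x‖)`, these are positive semidefinite as soon as
`sinc ‖y - x‖` is. That follows from `∫_{‖y‖<1} cos ⟪y / ‖y‖, w⟫ dy = (4π/3) sinc ‖w‖`, which
after rotating `w` onto the last axis is Archimedes' hat-box theorem (for `y` uniform in the unit
ball, `y₃ / ‖y‖` is uniform on `[-1, 1]`), together with the positive semidefiniteness of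
`cos (f y - f x)`: `∑ aⱼ aₖ cos (f xₖ - f xⱼ) = (∑ aⱼ cos f xⱼ)² + (∑ aⱼ sin f xⱼ)²`.
-/

open MeasureTheory Matrix

noncomputable def sinc (t : ℝ) : ℝ := if t = 0 then 1 else Real.sin t / t

open Set RealInnerProductSpace
open Real hiding sinc

section Kernel

variable {X : Type*}

def IsPosSemidefKernel (K : X → X → ℝ) : Prop :=
  ∀ (N : ℕ) (x : Fin N → X) (a : Fin N → ℝ), 0 ≤ ∑ j, ∑ k, a j * a k * K (x j) (x k)

def IsPosSemidefMatrixKernel {n : Type*} [Fintype n] (B : X → X → Matrix n n ℝ) : Prop :=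
  ∀ (N : ℕ) (x : Fin N → X) (c : Fin N → n → ℝ), 0 ≤ ∑ j, ∑ k, c j ⬝ᵥ (B (x j) (x k) *ᵥ c k)

theorem isPosSemidefKernel_cos_sub (f : X → ℝ) :
    IsPosSemidefKernel fun x y => cos (f y - f x) := by
  intro N x a
  have sum_squares : ∑ j, ∑ k, a j * a k * cos (f (x k) - f (x j))
      = (∑ j, a j * cos (f (x j))) ^ 2 + (∑ j, a j * sin (f (x j))) ^ 2 := by
    simp only [sq, Finset.sum_mul_sum, ← Finset.sum_add_distrib, cos_sub]
    exact Finset.sum_congr rfl fun j _ => Finset.sum_congr rfl fun k _ => by ring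
  rw [sum_squares]
  positivity

theorem IsPosSemidefKernel.of_const_mul {K : X → X → ℝ} {r : ℝ} (hr : 0 < r)
    (hK : IsPosSemidefKernel fun x y => r * K x y) : IsPosSemidefKernel K := by
  intro N x a
  have hsum : ∑ j, ∑ k, a j * a k * (r * K (x j) (x k))
      = r * ∑ j, ∑ k, a j * a k * K (x j) (x k) := by
    simp only [Finset.mul_sum]
    exact Finset.sum_congr rfl fun j _ => Finset.sum_congr rfl fun k _ => by ring
  exact (mul_nonneg_iff_of_pos_left hr).1 (hsum ▸ hK N x a)

theorem IsPosSemidefKernel.comp {Y : Type*} {K : X → X → ℝ} (hK : IsPosSemidefKernel K)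
    (f : Y → X) : IsPosSemidefKernel fun x y => K (f x) (f y) :=
  fun N x a => hK N (f ∘ x) a

theorem IsPosSemidefKernel.integral {Ω : Type*} [MeasurableSpace Ω] (μ : Measure Ω)
    {K : Ω → X → X → ℝ} (hK : ∀ ω, IsPosSemidefKernel (K ω))
    (hint : ∀ x y, Integrable (fun ω => K ω x y) μ) :
    IsPosSemidefKernel fun x y => ∫ ω, K ω x y ∂μ := by
  intro N x a
  have hint' : ∀ j k, Integrable (fun ω => a j * a k * K ω (x j) (x k)) μ :=
    fun j k => (hint _ _).const_mul _
  calc (0 : ℝ) ≤ ∫ ω, ∑ j, ∑ k, a j * a k * K ω (x j) (x k) ∂μ :=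
        integral_nonneg fun ω => hK ω N x a
    _ = ∑ j, ∑ k, a j * a k * ∫ ω, K ω (x j) (x k) ∂μ := by
        rw [integral_finsetSum _ fun j _ => integrable_finsetSum _ fun k _ => hint' j k]
        refine Finset.sum_congr rfl fun j _ => ?_
        rw [integral_finsetSum _ fun k _ => hint' j k]
        simp only [integral_const_mul]

theorem IsPosSemidefKernel.smul_vecMulVec {n : Type*} [Fintype n] {K : X → X → ℝ}
    (hK : IsPosSemidefKernel K) (v : n → ℝ) :
    IsPosSemidefMatrixKernel fun x y => K x y • vecMulVec v v := by
  intro N x c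
  convert hK N x fun j => v ⬝ᵥ c j using 3 with j _ k _
  rw [smul_mulVec, vecMulVec_mulVec, dotProduct_smul, dotProduct_smul, smul_eq_mul,
    MulOpposite.smul_eq_mul_unop, MulOpposite.unop_op, dotProduct_comm]
  ring

theorem IsPosSemidefMatrixKernel.sum {n ι : Type*} [Fintype n] (s : Finset ι)
    {B : ι → X → X → Matrix n n ℝ} (hB : ∀ i ∈ s, IsPosSemidefMatrixKernel (B i)) :
    IsPosSemidefMatrixKernel fun x y => ∑ i ∈ s, B i x y := by
  intro N x c
  calc 0 ≤ ∑ i ∈ s, ∑ j, ∑ k, c j ⬝ᵥ (B i (x j) (x k) *ᵥ c k) :=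
        Finset.sum_nonneg fun i hi => hB i hi N x c
    _ = ∑ j, ∑ k, c j ⬝ᵥ ((∑ i ∈ s, B i (x j) (x k)) *ᵥ c k) := by
        simp only [sum_mulVec, dotProduct_sum]
        rw [Finset.sum_comm]
        exact Finset.sum_congr rfl fun j _ => Finset.sum_comm

end Kernel

theorem sinc_eq_real_sinc : sinc = Real.sinc := rfl

theorem integral_cos_mul_neg_one_one (d : ℝ) : ∫ s in (-1)..1, cos (d * s) = 2 * sinc d := by
  rcases eq_or_ne d 0 with rfl | hd
  · norm_num [sinc]
  rw [intervalIntegral.integral_comp_mul_left cos hd, integral_cos, mul_neg, mul_one, sin_neg,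
    smul_eq_mul, sinc_eq_real_sinc, Real.sinc_of_ne_zero hd]
  ring

theorem hasDerivAt_sqrt_sq_add_sq {r : ℝ} (t : ℝ) (hr : r ≠ 0) :
    HasDerivAt (fun r => √(r ^ 2 + t ^ 2)) (r / √(r ^ 2 + t ^ 2)) r := by
  have hpos : r ^ 2 + t ^ 2 ≠ 0 := by positivity
  convert ((hasDerivAt_pow 2 r).add_const (t ^ 2)).sqrt hpos using 1
  have hsqrt : √(r ^ 2 + t ^ 2) ≠ 0 := by positivity
  field_simp
  norm_num [mul_comm]

theorem integral_mul_comp_sqrt_sq_add_sq (g : ℝ → ℝ) (t : ℝ) {R : ℝ} (hR : 0 ≤ R) :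
    ∫ r in 0..R, r * g √(r ^ 2 + t ^ 2) = ∫ u in |t|..√(R ^ 2 + t ^ 2), u * g u := by
  set f : ℝ → ℝ := fun r => √(r ^ 2 + t ^ 2)
  have hintegrand : ∀ r, r * g (f r) = ((fun u => u * g u) ∘ f) r * (r / f r) := by
    intro r
    rcases eq_or_ne (f r) 0 with h0 | h0
    · have : r = 0 := by nlinarith [sqrt_eq_zero'.1 h0, sq_nonneg r, sq_nonneg t]
      simp [this]
    · simp only [Function.comp_apply]
      field_simp
  have hr_pos : ∀ r ∈ Ioo (min 0 R) (max 0 R), 0 < r := fun r hr => by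
    simp only [min_eq_left hR, max_eq_right hR] at hr
    exact hr.1
  rw [intervalIntegral.integral_congr fun r _ => hintegrand r,
    intervalIntegral.integral_comp_mul_deriv_of_deriv_nonneg (by fun_prop)
      (fun r hr => hasDerivAt_sqrt_sq_add_sq t (hr_pos r hr).ne')
      fun r hr => div_nonneg (hr_pos r hr).le (sqrt_nonneg _)]
  simp [sqrt_sq_eq_abs]

theorem integral_Ioi_mul_indicator_sqrt_sq_add_sq (k : ℝ → ℝ) (t : ℝ) :
    ∫ r in Ioi 0, r * (Iio 1).indicator k √(r ^ 2 + t ^ 2) = ∫ u in Ioc |t| 1, u * k u := by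
  rcases le_or_gt 1 |t| with ht | ht
  · have hvanish : ∀ r, r * (Iio 1).indicator k √(r ^ 2 + t ^ 2) = 0 := fun r => by
      have hge : 1 ≤ √(r ^ 2 + t ^ 2) :=
        ht.trans (sqrt_sq_eq_abs t ▸ sqrt_le_sqrt (by nlinarith))
      rw [indicator_of_notMem (show √(r ^ 2 + t ^ 2) ∉ Iio 1 from not_lt.2 hge), mul_zero]
    simp [hvanish, Ioc_eq_empty_of_le ht]
  have ht2 : t ^ 2 < 1 := by nlinarith [sq_abs t, abs_nonneg t]
  set R := √(1 - t ^ 2)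
  have hR : 0 ≤ R := sqrt_nonneg _
  have hRt : √(R ^ 2 + t ^ 2) = 1 := by rw [sq_sqrt (by linarith), sub_add_cancel, sqrt_one]
  calc ∫ r in Ioi (0 : ℝ), r * (Iio 1).indicator k √(r ^ 2 + t ^ 2)
      = ∫ r in 0..R, r * (Iio 1).indicator k √(r ^ 2 + t ^ 2) := by
        rw [intervalIntegral.integral_of_le hR]
        refine setIntegral_eq_of_subset_of_forall_sdiff_eq_zero measurableSet_Ioi
          Ioc_subset_Ioi_self fun r hr => ?_
        have hRr : R < r := not_le.1 fun hrR => hr.2 ⟨hr.1, hrR⟩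
        rw [indicator_of_notMem, mul_zero]
        rw [mem_Iio, not_lt, ← hRt]
        exact sqrt_le_sqrt (by nlinarith)
    _ = ∫ u in Ioo |t| 1, u * (Iio 1).indicator k u := by
        rw [integral_mul_comp_sqrt_sq_add_sq _ _ hR, hRt, intervalIntegral.integral_of_le ht.le,
          integral_Ioc_eq_integral_Ioo]
    _ = ∫ u in Ioc |t| 1, u * k u := by
        rw [integral_Ioc_eq_integral_Ioo]
        exact setIntegral_congr_fun measurableSet_Ioo fun u hu => by
          rw [indicator_of_mem (show u ∈ Iio 1 from hu.2)]

theorem integral_indicator_sqrt_sq_add_sq_add_sq (k : ℝ → ℝ) (t : ℝ) :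
    ∫ q : ℝ × ℝ, (Iio 1).indicator k √(q.1 ^ 2 + q.2 ^ 2 + t ^ 2)
      = 2 * π * ∫ u in Ioc |t| 1, u * k u := by
  rw [← integral_comp_polarCoord_symm]
  have hpolar : ∀ p ∈ polarCoord.target,
      p.1 • (Iio 1).indicator k √((polarCoord.symm p).1 ^ 2 + (polarCoord.symm p).2 ^ 2 + t ^ 2)
        = p.1 * (Iio 1).indicator k √(p.1 ^ 2 + t ^ 2) * 1 := by
    rintro ⟨r, θ⟩ -
    have hsq : (r * cos θ) ^ 2 + (r * sin θ) ^ 2 = r ^ 2 := by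
      linear_combination r ^ 2 * sin_sq_add_cos_sq θ
    simp only [polarCoord_symm_apply, smul_eq_mul, mul_one, hsq]
  rw [setIntegral_congr_fun polarCoord.open_target.measurableSet hpolar, polarCoord_target,
    Measure.volume_eq_prod, ← Measure.prod_restrict,
    integral_prod_mul (fun r => r * (Iio 1).indicator k √(r ^ 2 + t ^ 2)) fun _ => (1 : ℝ),
    integral_Ioi_mul_indicator_sqrt_sq_add_sq, integral_const, smul_eq_mul, mul_one,
    Measure.real, Measure.restrict_apply_univ, volume_Ioo,
    ENNReal.toReal_ofReal (by linarith [pi_pos])]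
  ring

theorem integrable_indicator_abs_lt_le_one_mul_comp_div {h : ℝ → ℝ} (hh : Continuous h) :
    Integrable ({p : ℝ × ℝ | |p.1| < p.2 ∧ p.2 ≤ 1}.indicator fun p => p.2 * h (p.1 / p.2)) := by
  obtain ⟨M, hM⟩ := isCompact_Icc.exists_bound_of_continuousOn (hh.continuousOn (s := Icc (-1) 1))
  set S : Set (ℝ × ℝ) := {p | |p.1| < p.2 ∧ p.2 ≤ 1}
  have hS : MeasurableSet S :=
    (measurableSet_lt measurable_fst.abs measurable_snd).inter
      (measurableSet_le measurable_snd measurable_const)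
  have hS_bdd : S ⊆ Icc (-1) 1 ×ˢ Icc 0 1 := fun p ⟨h1, h2⟩ => by
    have := abs_lt.1 (h1.trans_le h2)
    exact ⟨⟨this.1.le, this.2.le⟩, (abs_nonneg _).trans h1.le, h2⟩
  refine (integrable_indicator_iff hS).2 (IntegrableOn.of_bound
    ((measure_mono hS_bdd).trans_lt (isCompact_Icc.prod isCompact_Icc).measure_lt_top)
    (by fun_prop) M ((ae_restrict_iff' hS).2 (Filter.Eventually.of_forall fun p hp => ?_)))
  have hu : 0 < p.2 := (abs_nonneg _).trans_lt hp.1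
  have hdiv : p.1 / p.2 ∈ Icc (-1) 1 := by
    rw [mem_Icc, ← abs_le, abs_div, abs_of_pos hu]
    exact div_le_one_of_le₀ hp.1.le hu.le
  rw [norm_mul, norm_of_nonneg hu.le]
  nlinarith [hM _ hdiv, norm_nonneg (h (p.1 / p.2)), hp.2]

theorem integral_Ioo_mul_comp_div (h : ℝ → ℝ) {u : ℝ} (hu : 0 < u) :
    ∫ t in Ioo (-u) u, u * h (t / u) = u ^ 2 * ∫ s in (-1)..1, h s := by
  rw [← integral_Ioc_eq_integral_Ioo, ← intervalIntegral.integral_of_le (by linarith),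
    intervalIntegral.integral_const_mul, intervalIntegral.integral_comp_div _ hu.ne', neg_div,
    div_self hu.ne', smul_eq_mul]
  ring

theorem integral_integral_Ioc_abs_mul_comp_div {h : ℝ → ℝ} (hh : Continuous h) :
    ∫ t, ∫ u in Ioc |t| 1, u * h (t / u) = (∫ s in (-1)..1, h s) / 3 := by
  set G : ℝ × ℝ → ℝ := {p | |p.1| < p.2 ∧ p.2 ≤ 1}.indicator fun p => p.2 * h (p.1 / p.2)
  have hslice_t : ∀ t, ∫ u in Ioc |t| 1, u * h (t / u) = ∫ u, G (t, u) := fun t => by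
    rw [← integral_indicator measurableSet_Ioc]
    rfl
  have hslice_u : ∀ u, ∫ t, G (t, u) = (Ioc 0 1).indicator (· ^ 2 * ∫ s in (-1)..1, h s) u := by
    intro u
    by_cases hu : u ∈ Ioc 0 1
    · have hG_slice : (fun t => G (t, u)) = (Ioo (-u) u).indicator fun t => u * h (t / u) := by
        ext t
        simp only [G, indicator, mem_ofPred_eq, mem_Ioo, ← abs_lt, hu.2, and_true]
      rw [hG_slice, integral_indicator measurableSet_Ioo, integral_Ioo_mul_comp_div h hu.1,
        indicator_of_mem hu]
    · rw [indicator_of_notMem hu]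
      refine integral_eq_zero_of_ae (Filter.Eventually.of_forall fun t => indicator_of_notMem ?_ _)
      exact fun ht => hu ⟨(abs_nonneg t).trans_lt ht.1, ht.2⟩
  simp only [hslice_t]
  rw [integral_integral_swap (f := fun t u => G (t, u))
      (integrable_indicator_abs_lt_le_one_mul_comp_div hh),
    integral_congr_ae (Filter.Eventually.of_forall hslice_u), integral_indicator measurableSet_Ioc,
    ← intervalIntegral.integral_of_le zero_le_one, intervalIntegral.integral_mul_const,
    integral_pow]
  norm_num
  ring

local notation "ℝ³" => EuclideanSpace ℝ (Fin 3)

def MeasurableEquiv.prodToEuclideanSpaceFinThree : ℝ × ℝ × ℝ ≃ᵐ ℝ³ :=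
  ((MeasurableEquiv.refl ℝ).prodCongr MeasurableEquiv.finTwoArrow.symm).trans
    ((MeasurableEquiv.piFinSuccAbove (fun _ => ℝ) 2).symm.trans
      (MeasurableEquiv.toLp 2 (Fin 3 → ℝ)))

theorem MeasurableEquiv.prodToEuclideanSpaceFinThree_apply (p : ℝ × ℝ × ℝ) :
    MeasurableEquiv.prodToEuclideanSpaceFinThree p = !₂[p.2.1, p.2.2, p.1] := by
  ext i
  fin_cases i <;> rfl

theorem MeasurableEquiv.measurePreserving_prodToEuclideanSpaceFinThree :
    MeasurePreserving MeasurableEquiv.prodToEuclideanSpaceFinThree :=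
  ((MeasurePreserving.id volume).prod (volume_preserving_finTwoArrow ℝ).symm).trans
    ((volume_preserving_piFinSuccAbove (fun _ => ℝ) 2).symm.trans
      (EuclideanSpace.volume_preserving_symm_measurableEquiv_toLp (Fin 3)).symm)

theorem norm_euclideanSpace_fin_three (a b c : ℝ) :
    ‖!₂[a, b, c]‖ = √(a ^ 2 + b ^ 2 + c ^ 2) := by
  simp [EuclideanSpace.norm_eq, Fin.sum_univ_three]

/-- Archimedes' hat-box theorem. -/
theorem integral_ball_comp_apply_two_div_norm {h : ℝ → ℝ} (hh : Continuous h) :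
    ∫ y in Metric.ball (0 : ℝ³) 1, h (y 2 / ‖y‖) = 2 * π / 3 * ∫ s in (-1)..1, h s := by
  obtain ⟨M, hM⟩ := isCompact_Icc.exists_bound_of_continuousOn (hh.continuousOn (s := Icc (-1) 1))
  set e := MeasurableEquiv.prodToEuclideanSpaceFinThree
  set F : ℝ³ → ℝ := (Metric.ball 0 1).indicator fun y => h (y 2 / ‖y‖)
  have hF : Integrable F := by
    refine (integrable_indicator_iff measurableSet_ball).2 (IntegrableOn.of_bound
      measure_ball_lt_top (hh.measurable.comp (by fun_prop)).aestronglyMeasurable M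
      (Filter.Eventually.of_forall fun y => hM _ ?_))
    rw [mem_Icc, ← abs_le, abs_div, abs_norm, ← norm_eq_abs]
    exact div_le_one_of_le₀ (PiLp.norm_apply_le y 2) (norm_nonneg y)
  have hslice : ∀ t (q : ℝ × ℝ),
      F (e (t, q)) = (Iio 1).indicator (fun u => h (t / u)) √(q.1 ^ 2 + q.2 ^ 2 + t ^ 2) := by
    intro t q
    simp [F, e, indicator, MeasurableEquiv.prodToEuclideanSpaceFinThree_apply,
      norm_euclideanSpace_fin_three]
  have he := MeasurableEquiv.measurePreserving_prodToEuclideanSpaceFinThree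
  calc ∫ y in Metric.ball (0 : ℝ³) 1, h (y 2 / ‖y‖)
      = ∫ p, F (e p) := by rw [he.integral_comp' (g := F), integral_indicator measurableSet_ball]
    _ = ∫ t, ∫ q, F (e (t, q)) :=
        integral_prod _ ((he.integrable_comp_emb e.measurableEmbedding).2 hF)
    _ = ∫ t, 2 * π * ∫ u in Ioc |t| 1, u * h (t / u) := by
        simp only [hslice, integral_indicator_sqrt_sq_add_sq_add_sq]
    _ = 2 * π / 3 * ∫ s in (-1)..1, h s := by
        rw [integral_const_mul, integral_integral_Ioc_abs_mul_comp_div hh]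
        ring

theorem exists_linearIsometryEquiv_inner_map_eq {E : Type*} [NormedAddCommGroup E]
    [InnerProductSpace ℝ E] {b : E} (hb : ‖b‖ = 1) (w : E) :
    ∃ e : E ≃ₗᵢ[ℝ] E, ∀ z, ⟪e z, w⟫ = ‖w‖ * ⟪z, b⟫ := by
  rcases eq_or_ne w 0 with rfl | hw
  · exact ⟨LinearIsometryEquiv.refl ℝ E, fun z => by simp⟩
  set e := Submodule.reflection (ℝ ∙ (b - ‖w‖⁻¹ • w))ᗮ
  have heb : e b = ‖w‖⁻¹ • w := Submodule.reflection_sub (by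
    rw [hb, norm_smul, norm_inv, norm_norm, inv_mul_cancel₀ (norm_ne_zero_iff.2 hw)])
  refine ⟨e, fun z => ?_⟩
  calc ⟪e z, w⟫ = ⟪e z, ‖w‖ • e b⟫ := by
        rw [heb, smul_smul, mul_inv_cancel₀ (norm_ne_zero_iff.2 hw), one_smul]
    _ = ‖w‖ * ⟪z, b⟫ := by rw [real_inner_smul_right, e.inner_map_map]

theorem LinearIsometryEquiv.setIntegral_ball_zero_comp {E : Type*} [NormedAddCommGroup E]
    [InnerProductSpace ℝ E] [FiniteDimensional ℝ E] [MeasurableSpace E] [BorelSpace E]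
    (e : E ≃ₗᵢ[ℝ] E) (f : E → ℝ) (r : ℝ) :
    ∫ y in Metric.ball 0 r, f (e y) = ∫ y in Metric.ball 0 r, f y := by
  have hpre : e ⁻¹' Metric.ball 0 r = Metric.ball 0 r := by simp
  simpa only [hpre] using
    e.measurePreserving.setIntegral_preimage_emb e.toHomeomorph.measurableEmbedding f
      (Metric.ball 0 r)

theorem integral_ball_cos_inner_inv_norm_smul (w : ℝ³) :
    ∫ y in Metric.ball (0 : ℝ³) 1, cos ⟪‖y‖⁻¹ • y, w⟫ = 4 * π / 3 * sinc ‖w‖ := by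
  obtain ⟨e, he⟩ := exists_linearIsometryEquiv_inner_map_eq
    (by simp : ‖EuclideanSpace.single (2 : Fin 3) (1 : ℝ)‖ = 1) w
  have hrotate : ∀ z, cos ⟪‖e z‖⁻¹ • e z, w⟫ = cos (‖w‖ * (z 2 / ‖z‖)) := fun z => by
    rw [real_inner_smul_left, he, e.norm_map, EuclideanSpace.inner_single_right]
    simp only [one_mul, RCLike.conj_to_real]
    ring_nf
  rw [← e.setIntegral_ball_zero_comp, funext hrotate,
    integral_ball_comp_apply_two_div_norm (h := fun s => cos (‖w‖ * s)) (by fun_prop),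
    integral_cos_mul_neg_one_one]
  ring

theorem isPosSemidefKernel_sinc_norm_sub :
    IsPosSemidefKernel fun x y : ℝ³ => sinc ‖y - x‖ := by
  refine IsPosSemidefKernel.of_const_mul (r := 4 * π / 3) (by positivity) ?_
  simp only [← integral_ball_cos_inner_inv_norm_smul, inner_sub_right]
  exact IsPosSemidefKernel.integral _ (fun _ => isPosSemidefKernel_cos_sub _) fun _ _ =>
    IntegrableOn.of_bound measure_ball_lt_top (by fun_prop : Measurable _).aestronglyMeasurable 1
      (Filter.Eventually.of_forall fun _ => abs_cos_le_one _)

theorem isPosSemidefKernel_sinc_mul_norm_sub (c : ℝ) :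
    IsPosSemidefKernel fun x y : ℝ³ => sinc (c * ‖y - x‖) := by
  have hscale : ∀ x y : ℝ³, sinc ‖c • y - c • x‖ = sinc (c * ‖y - x‖) := fun x y => by
    rw [← smul_sub, norm_smul, norm_eq_abs, sinc_eq_real_sinc]
    rcases abs_choice c with hc | hc <;> rw [hc]
    rw [neg_mul, Real.sinc_neg]
  simpa only [hscale] using isPosSemidefKernel_sinc_norm_sub.comp fun x : ℝ³ => c • x

theorem isPosSemidefKernel_integral_sinc_mul_norm_sub (Φ : Measure ℝ) [IsFiniteMeasure Φ] :
    IsPosSemidefKernel fun x y : ℝ³ => ∫ l, sinc (l * ‖y - x‖) ∂Φ :=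
  IsPosSemidefKernel.integral Φ isPosSemidefKernel_sinc_mul_norm_sub fun _ _ =>
    Integrable.of_bound
      (continuous_sinc.measurable.comp (measurable_id.mul_const _)).aestronglyMeasurable 1
      (Filter.Eventually.of_forall fun _ => abs_sinc_le_one _)

theorem two_component_matern_kernel_posSemidef_general
    (Φ : Fin 3 → Measure ℝ) (hΦfin : ∀ m, IsFiniteMeasure (Φ m))
    (C : Fin 3 → Matrix (Fin 2) (Fin 2) ℝ)
    (hC : C = ![!![0, 0; 0, 1],
                (1/4 : ℝ) • !![1, Real.sqrt 3; Real.sqrt 3, 3],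
                (1/4 : ℝ) • !![1, -Real.sqrt 3; -Real.sqrt 3, 3]])
    (B : EuclideanSpace ℝ (Fin 3) → EuclideanSpace ℝ (Fin 3) → Matrix (Fin 2) (Fin 2) ℝ)
    (hB : ∀ x y, B x y = ∑ m, (∫ l, sinc (l * ‖y - x‖) ∂(Φ m)) • C m) :
    ∀ (N : ℕ) (x : Fin N → EuclideanSpace ℝ (Fin 3)) (c : Fin N → Fin 2 → ℝ),
      0 ≤ ∑ j, ∑ k, c j ⬝ᵥ ((B (x j) (x k)) *ᵥ c k) := by
  set v : Fin 3 → Fin 2 → ℝ := ![![0, 1], ![1 / 2, √3 / 2], ![1 / 2, -(√3 / 2)]]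
  have hC_rank_one : C = fun m => vecMulVec (v m) (v m) := by
    have h3 : √3 * √3 = 3 := mul_self_sqrt (by norm_num)
    subst hC
    ext m i j
    fin_cases m <;> fin_cases i <;> fin_cases j <;> simp [v, vecMulVec] <;> linarith
  have hB_rank_one :
      B = fun x y => ∑ m, (∫ l, sinc (l * ‖y - x‖) ∂(Φ m)) • vecMulVec (v m) (v m) := by
    funext x y
    rw [hB, hC_rank_one]
  show IsPosSemidefMatrixKernel B
  rw [hB_rank_one]
  exact IsPosSemidefMatrixKernel.sum _ fun m _ =>
    (@isPosSemidefKernel_integral_sinc_mul_norm_sub (Φ m) (hΦfin m)).smul_vecMulVec (v m)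

/-- With `C¹ = [[0,0],[0,1]]`, `C² = (1/4)[[1,√3],[√3,3]]`,
`C³ = (1/4)[[1,−√3],[−√3,3]]`, and finite Borel measures `Φ₁, Φ₂, Φ₃` on `[0,∞)`,
the two-point correlation tensor
`B(x,y) = ∑_m (∫₀^∞ sinc(λ‖y−x‖) dΦ_m(λ)) C^m` is a positive semidefinite
matrix-valued kernel on `ℝ³`. -/
theorem two_component_matern_kernel_posSemidef
    (Φ : Fin 3 → Measure ℝ) (hΦfin : ∀ m, IsFiniteMeasure (Φ m))
    (hΦsupp : ∀ m, Φ m (Set.Iio (0 : ℝ)) = 0)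
    (C : Fin 3 → Matrix (Fin 2) (Fin 2) ℝ)
    (hC : C = ![!![0, 0; 0, 1],
                (1/4 : ℝ) • !![1, Real.sqrt 3; Real.sqrt 3, 3],
                (1/4 : ℝ) • !![1, -Real.sqrt 3; -Real.sqrt 3, 3]])
    (B : EuclideanSpace ℝ (Fin 3) → EuclideanSpace ℝ (Fin 3) → Matrix (Fin 2) (Fin 2) ℝ)
    (hB : ∀ x y, B x y = ∑ m, (∫ l, sinc (l * ‖y - x‖) ∂(Φ m)) • C m) :
    ∀ (N : ℕ) (x : Fin N → EuclideanSpace ℝ (Fin 3)) (c : Fin N → Fin 2 → ℝ),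
      0 ≤ ∑ j, ∑ k, c j ⬝ᵥ ((B (x j) (x k)) *ᵥ c k) :=
  two_component_matern_kernel_posSemidef_general Φ hΦfin C hC B hB
end
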